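/- For all n ≥ 3, the right-down diagonal d_n^{(3)} = F_{n−1} · S(n, n−2) of the Fibonacci-Fubini triangle equals p_3(n)·α^{n−1} − p_3(n)·β^{n−1}, where p_3(n) = (1/(24√5))·(3n−5)·(n−2)·(n−1)·n, α = (1+√5)/2 and β = (1−√5)/2. -/

import Mathlib

/-! Iterating the recurrence along the diagonal gives `24 S(n+2, n) = (n+2)(n+1)n(3n+1)`;
together with Binet's formula `F_n = (αⁿ - βⁿ)/√5` the claim becomes a polynomial identity. -/

def stirling2 : ℕ → ℕ → ℕ
  | 0, 0 => 1
  | 0, _ + 1 => 0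
  | _ + 1, 0 => 0
  | n + 1, k + 1 => stirling2 n k + (k + 1) * stirling2 n (k + 1)

theorem stirling2_eq_stirlingSecond : ∀ n k, stirling2 n k = Nat.stirlingSecond n k
  | 0, 0 | 0, _ + 1 | _ + 1, 0 => rfl
  | n + 1, k + 1 => by
    rw [stirling2, Nat.stirlingSecond_succ_succ, stirling2_eq_stirlingSecond n k,
      stirling2_eq_stirlingSecond n (k + 1), add_comm]

namespace Nat

theorem two_mul_stirlingSecond_succ_self_left (n : ℕ) :
    2 * stirlingSecond (n + 1) n = (n + 1) * n := by
  rw [stirlingSecond_succ_self_left, mul_comm, ← add_one_mul_choose_eq, choose_one_right]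

theorem stirlingSecond_add_two_self_left (n : ℕ) :
    24 * stirlingSecond (n + 2) n = (n + 2) * (n + 1) * n * (3 * n + 1) := by
  induction n with
  | zero => rfl
  | succ n ih =>
    have h := two_mul_stirlingSecond_succ_self_left (n + 1)
    rw [stirlingSecond_succ_succ]
    nlinarith

end Nat

open Real in
theorem fibFubiniD_three_general (n : ℕ) :
    (Nat.fib (n - 1) * stirling2 n (n - 2) : ℝ) =
      (1 / (24 * Real.sqrt 5) * (3 * (n : ℝ) - 5) * ((n : ℝ) - 2) * ((n : ℝ) - 1) * n) *
          ((1 + Real.sqrt 5) / 2) ^ (n - 1) -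
        (1 / (24 * Real.sqrt 5) * (3 * (n : ℝ) - 5) * ((n : ℝ) - 2) * ((n : ℝ) - 1) * n) *
          ((1 - Real.sqrt 5) / 2) ^ (n - 1) := by
  rcases n with _ | _ | k
  · simp
  · simp
  have hS : (stirling2 (k + 2) k : ℝ) = (k + 2) * (k + 1) * k * (3 * k + 1) / 24 := by
    rw [stirling2_eq_stirlingSecond, eq_div_iff (by norm_num), mul_comm]
    exact_mod_cast Nat.stirlingSecond_add_two_self_left k
  rw [show k + 1 + 1 - 2 = k from rfl, hS, Real.coe_fib_eq, Real.goldenRatio, Real.goldenConj]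
  push_cast
  field_simp
  ring

open Real in
/-- The third right-down diagonal of the Fibonacci-Fubini triangle:
`d_n^{(3)} = F_{n-1}·S(n,n-2) = p₃(n)·α^{n-1} − p₃(n)·β^{n-1}` with
`p₃(n) = (1/(24√5))(3n-5)(n-2)(n-1)n`. -/
theorem fibFubiniD_three (n : ℕ) (hn : 3 ≤ n) :
    (Nat.fib (n - 1) * stirling2 n (n - 2) : ℝ) =
      (1 / (24 * Real.sqrt 5) * (3 * (n : ℝ) - 5) * ((n : ℝ) - 2) * ((n : ℝ) - 1) * n) *
          ((1 + Real.sqrt 5) / 2) ^ (n - 1) -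
        (1 / (24 * Real.sqrt 5) * (3 * (n : ℝ) - 5) * ((n : ℝ) - 2) * ((n : ℝ) - 1) * n) *
          ((1 - Real.sqrt 5) / 2) ^ (n - 1) :=
  fibFubiniD_three_general n
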